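/- Suppose b₂ : ℝ^d → ℝ^d satisfies ⟨x, b₂(x)⟩ ≤ −θ₁|x|² + θ₂ and |b₂(x) − b₂(y)| ≤ θ₃|x − y| for positive constants θ₁, θ₂, θ₃, and u : ℝ^d → ℝ^d is C¹ with ‖u‖_∞ ≤ ε and ‖∇u‖_∞ ≤ ε. Let Φ(x) = x + u(x) (assumed a bi-Lipschitz bijection) and define b̂(y) = (λ u + (I + ∇u)·b₂)(Φ⁻¹(y)) for λ > 0. Then if ε > 0 is sufficiently small (depending on θ₁, θ₃, λ), there exist constants θ̂₁, θ̂₂ > 0 such that ⟨b̂(y), y⟩ ≤ −θ̂₁|y|² + θ̂₂ for all y ∈ ℝ^d. -/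
import Mathlib


open scoped RealInnerProductSpace

set_option maxHeartbeats 1000000 in
theorem stmt_5 {d : ℕ} (θ₁ θ₂ θ₃ lam : ℝ)
    (hθ₁ : 0 < θ₁) (hθ₂ : 0 < θ₂) (hθ₃ : 0 < θ₃) (hlam : 0 < lam) :
    ∃ ε > (0:ℝ),
      ∀ (b₂ u Φ Ψ : EuclideanSpace ℝ (Fin d) → EuclideanSpace ℝ (Fin d)),
        (∀ x, ⟪x, b₂ x⟫ ≤ -θ₁ * ‖x‖^2 + θ₂) →
        (∀ x y, ‖b₂ x - b₂ y‖ ≤ θ₃ * ‖x - y‖) →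
        ContDiff ℝ 1 u →
        (∀ x, ‖u x‖ ≤ ε) →
        (∀ x, ‖fderiv ℝ u x‖ ≤ ε) →
        (∀ x, Φ x = x + u x) →
        Function.LeftInverse Ψ Φ →
        Function.RightInverse Ψ Φ →
        (∀ x y, (1/2) * ‖x - y‖ ≤ ‖Φ x - Φ y‖ ∧ ‖Φ x - Φ y‖ ≤ 2 * ‖x - y‖) →
        ∃ t₁ > (0:ℝ), ∃ t₂ > (0:ℝ),
          ∀ y, ⟪lam • u (Ψ y) + b₂ (Ψ y) + fderiv ℝ u (Ψ y) (b₂ (Ψ y)), y⟫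
                ≤ -t₁ * ‖y‖^2 + t₂ := by
  obtain ⟨C, hC⟩ : ∃ C : ℝ, C = θ₂ + θ₃ := ⟨_, rfl⟩
  have hC0 : 0 < C := by rw [hC]; positivity
  obtain ⟨ε, hεdef⟩ : ∃ ε : ℝ, ε = min 1 (θ₁ / (4 * θ₃)) := ⟨_, rfl⟩
  have hε0 : 0 < ε := by rw [hεdef]; exact lt_min one_pos (by positivity)
  have hε1 : ε ≤ 1 := by rw [hεdef]; exact min_le_left _ _
  have hεθ : ε * θ₃ ≤ θ₁ / 4 := by
    have h6 : ε ≤ θ₁ / (4 * θ₃) := by rw [hεdef]; exact min_le_right _ _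
    calc ε * θ₃ ≤ (θ₁ / (4 * θ₃)) * θ₃ := by nlinarith
    _ = θ₁ / 4 := by field_simp
  refine ⟨ε, hε0, ?_⟩
  intro b₂ u Φ Ψ h1 h2 hu hub hdb hΦ hL hR hbil
  -- bound on ‖b₂ 0‖
  have hb0 : ‖b₂ 0‖ ≤ C := by
    by_cases h0 : b₂ 0 = 0
    · rw [h0]; simpa using hC0.le
    · set v : EuclideanSpace ℝ (Fin d) := (‖b₂ 0‖)⁻¹ • b₂ 0 with hv
      have hn0 : (0:ℝ) < ‖b₂ 0‖ := norm_pos_iff.mpr h0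
      have hnv : ‖v‖ = 1 := by
        rw [hv, norm_smul, norm_inv, norm_norm, inv_mul_cancel₀ hn0.ne']
      have h1v := h1 v
      rw [hnv] at h1v
      have hiv : ⟪v, b₂ 0⟫ = ‖b₂ 0‖ := by
        rw [hv, real_inner_smul_left, real_inner_self_eq_norm_sq]
        field_simp
      have hsplit : ⟪v, b₂ v⟫ = ⟪v, b₂ 0⟫ + ⟪v, b₂ v - b₂ 0⟫ := by
        rw [← inner_add_right]
        congr 1
        abel
      have habs : |⟪v, b₂ v - b₂ 0⟫| ≤ ‖v‖ * ‖b₂ v - b₂ 0‖ := abs_real_inner_le_norm _ _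
      have hlip : ‖b₂ v - b₂ 0‖ ≤ θ₃ * ‖v - 0‖ := h2 v 0
      rw [sub_zero, hnv] at hlip
      rw [hnv] at habs
      have h3 : -(‖b₂ v - b₂ 0‖) ≤ ⟪v, b₂ v - b₂ 0⟫ := by
        have := abs_le.mp habs
        linarith [this.1]
      rw [hsplit, hiv] at h1v
      rw [hC]
      nlinarith
  obtain ⟨K, hKdef⟩ : ∃ K : ℝ, K = 3*θ₁ + 2*θ₃ + C + lam := ⟨_, rfl⟩
  have hK0 : 0 < K := by rw [hKdef]; positivity
  refine ⟨θ₁/2, by positivity, θ₂ + 2*θ₁ + θ₃ + C + K^2/θ₁, by positivity, ?_⟩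
  intro y
  obtain ⟨x, hx⟩ : ∃ x, x = Ψ y := ⟨_, rfl⟩
  rw [← hx]
  have hyx : y = x + u x := by
    have := hR y
    rw [hΦ, ← hx] at this
    exact this.symm
  obtain ⟨s, hsdef⟩ : ∃ s : ℝ, s = ‖x‖ := ⟨_, rfl⟩
  obtain ⟨r, hrdef⟩ : ∃ r : ℝ, r = ‖y‖ := ⟨_, rfl⟩
  rw [← hrdef]
  have hs0 : 0 ≤ s := hsdef ▸ norm_nonneg _
  have hr0 : 0 ≤ r := hrdef ▸ norm_nonneg _
  obtain ⟨B, hBdef⟩ : ∃ B : ℝ, B = ‖b₂ x‖ := ⟨_, rfl⟩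
  have hB0 : 0 ≤ B := hBdef ▸ norm_nonneg _
  have hB : B ≤ θ₃ * s + C := by
    have h2' := h2 x 0
    rw [sub_zero, ← hsdef] at h2'
    have h4 := norm_sub_norm_le (b₂ x) (b₂ 0)
    rw [← hBdef] at h4
    linarith
  have hrs : r ≤ s + ε := by
    rw [hrdef, hsdef]
    have h4 : ‖y‖ ≤ ‖x‖ + ‖u x‖ := by rw [hyx]; exact norm_add_le _ _
    linarith [hub x]
  have hsr : s ≤ r + ε := by
    rw [hrdef, hsdef]
    have h5 : y - u x = x := by rw [hyx]; abel
    have h4 : ‖y - u x‖ ≤ ‖y‖ + ‖u x‖ := norm_sub_le _ _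
    rw [h5] at h4
    linarith [hub x]
  have A1 : ⟪lam • u x, y⟫ ≤ lam * ε * r := by
    calc ⟪lam • u x, y⟫ ≤ ‖lam • u x‖ * ‖y‖ := real_inner_le_norm _ _
    _ = lam * ‖u x‖ * r := by rw [norm_smul, Real.norm_eq_abs, abs_of_pos hlam, hrdef]
    _ ≤ lam * ε * r := by
        nlinarith [mul_nonneg (mul_nonneg hlam.le (sub_nonneg.mpr (hub x))) hr0]
  have A2 : ⟪b₂ x, x⟫ ≤ -θ₁ * s^2 + θ₂ := by
    rw [real_inner_comm, hsdef]; exact h1 x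
  have A3 : ⟪b₂ x, u x⟫ ≤ B * ε := by
    calc ⟪b₂ x, u x⟫ ≤ ‖b₂ x‖ * ‖u x‖ := real_inner_le_norm _ _
    _ ≤ B * ε := by rw [hBdef]; exact mul_le_mul_of_nonneg_left (hub x) (norm_nonneg _)
  have A4 : ⟪fderiv ℝ u x (b₂ x), y⟫ ≤ ε * B * r := by
    calc ⟪fderiv ℝ u x (b₂ x), y⟫ ≤ ‖fderiv ℝ u x (b₂ x)‖ * ‖y‖ := real_inner_le_norm _ _
    _ ≤ (‖fderiv ℝ u x‖ * ‖b₂ x‖) * ‖y‖ :=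
        mul_le_mul_of_nonneg_right ((fderiv ℝ u x).le_opNorm _) (norm_nonneg _)
    _ ≤ ε * B * r := by
        rw [hBdef, hrdef]
        nlinarith [mul_nonneg (mul_nonneg (sub_nonneg.mpr (hdb x)) (norm_nonneg (b₂ x))) (norm_nonneg y)]
  have hsplit : ⟪lam • u x + b₂ x + fderiv ℝ u x (b₂ x), y⟫
      = ⟪lam • u x, y⟫ + (⟪b₂ x, x⟫ + ⟪b₂ x, u x⟫) + ⟪fderiv ℝ u x (b₂ x), y⟫ := by
    rw [inner_add_left, inner_add_left]
    congr 1
    congr 1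
    rw [hyx, inner_add_right]
  have main : ⟪lam • u x + b₂ x + fderiv ℝ u x (b₂ x), y⟫
      ≤ -θ₁*s^2 + θ₂ + lam*ε*r + B*ε + ε*B*r := by
    rw [hsplit]; linarith
  -- s² ≥ r² - 2εr - ε²
  have h7 : r^2 - 2*ε*r - ε^2 ≤ s^2 := by
    nlinarith [mul_nonneg (by linarith : (0:ℝ) ≤ s - r + ε) (by linarith : (0:ℝ) ≤ s + r),
      mul_le_mul_of_nonneg_left hsr hε0.le]
  have h7' : θ₁*(r^2 - 2*ε*r - ε^2) ≤ θ₁*s^2 := mul_le_mul_of_nonneg_left h7 hθ₁.le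
  -- ε B ≤ (θ₁/4)(r+1) + εC
  have h9 : ε*B ≤ (θ₁/4)*(r+1) + ε*C := by
    have h9a : ε*B ≤ ε*(θ₃*s + C) := mul_le_mul_of_nonneg_left hB hε0.le
    have h9b : (ε*θ₃)*s ≤ (θ₁/4)*(r+1) := by
      nlinarith [mul_le_mul_of_nonneg_left hsr (mul_nonneg hε0.le hθ₃.le),
        mul_nonneg hε0.le hθ₃.le]
    nlinarith
  have h9' : (ε*B)*r ≤ ((θ₁/4)*(r+1) + ε*C)*r := mul_le_mul_of_nonneg_right h9 hr0
  -- absorb linear term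
  have h10 : K*r - (θ₁/4)*r^2 ≤ K^2/θ₁ := by
    rw [le_div_iff₀ hθ₁]
    nlinarith [sq_nonneg (θ₁*r - 2*K)]
  have h11 : (2*θ₁*ε + lam*ε + θ₁/2 + ε*C)*r ≤ K*r := by
    have : 2*θ₁*ε + lam*ε + θ₁/2 + ε*C ≤ K := by
      rw [hKdef]
      nlinarith [mul_le_mul_of_nonneg_left hε1 hθ₁.le,
        mul_le_mul_of_nonneg_left hε1 hlam.le,
        mul_le_mul_of_nonneg_left hε1 hC0.le]
    exact mul_le_mul_of_nonneg_right this hr0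
  have hε2 : ε^2 ≤ 1 := by nlinarith [mul_le_mul_of_nonneg_left hε1 hε0.le]
  have h12 : θ₁*ε^2 ≤ θ₁ := by nlinarith [mul_le_mul_of_nonneg_left hε2 hθ₁.le]
  have hεC : ε*C ≤ C := by nlinarith [mul_le_mul_of_nonneg_left hε1 hC0.le]
  linarith [main, h7', h9, h9', h10, h11, h12, hεC]
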